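/- Let σ : ℝ → ℝⁿ be differentiable, let A : ℝ → Matrix(n,n,ℝ), d : ℝ → ℝⁿ, ρ : ℝ → ℝ, k : ℝ → ℝ, and let μ > −1, κ > 0 be such that for every t ≥ 0: yᵀ A(t) y ≥ μ ‖y‖² for all y ∈ ℝⁿ, ‖d(t)‖ ≤ ρ(t) with ρ(t) ≥ 0, k(t) = (κ + ρ(t))/(1 + μ), and whenever σ(t) ≠ 0, σ′(t) = −k(t) σ(t)/‖σ(t)‖ − k(t) A(t) (σ(t)/‖σ(t)‖) + d(t). Then ⟨σ(t), σ′(t)⟩ ≤ −κ ‖σ(t)‖ for every t ≥ 0 with σ(t) ≠ 0, and σ(t) = 0 for all t ≥ √2 ‖σ(0)‖ / κ. -/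

import Mathlib

open Matrix RealInnerProductSpace

/- The closed-loop field makes `⟪σ, σ̇⟫ ≤ -(k (1 + μ) - ρ) ‖σ‖ = -κ ‖σ‖`: the switching term
contributes `-k ‖σ‖`, coercivity of `A` at least `k μ ‖σ‖` more, and the disturbance at most
`ρ ‖σ‖` back. Hence `‖σ(t)‖ + κ t` is nonincreasing on every interval where `σ ≠ 0`, so `σ`
cannot stay away from `0` beyond `‖σ(0)‖ / κ`; and once `σ(a) = 0`, a later `σ(t) ≠ 0` would
give `‖σ(t)‖ + κ t ≤ κ a` on the last stretch away from zero, which is absurd. -/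

noncomputable def slidingField {n : ℕ} (k : ℝ) (A : Matrix (Fin n) (Fin n) ℝ)
    (d s : EuclideanSpace ℝ (Fin n)) : EuclideanSpace ℝ (Fin n) :=
  -(k • (‖s‖⁻¹ • s)) - k • (EuclideanSpace.equiv (Fin n) ℝ).symm (A.mulVec (‖s‖⁻¹ • s)) + d

theorem EuclideanSpace.inner_equiv_symm {n : ℕ} (x : EuclideanSpace ℝ (Fin n)) (v : Fin n → ℝ) :
    ⟪x, (EuclideanSpace.equiv (Fin n) ℝ).symm v⟫ = x ⬝ᵥ v := by
  simp [EuclideanSpace.inner_eq_star_dotProduct, dotProduct_comm]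

theorem inner_slidingField_le {n : ℕ} {k μ ρ : ℝ} {A : Matrix (Fin n) (Fin n) ℝ}
    {d s : EuclideanSpace ℝ (Fin n)} (hk : 0 ≤ k) (hA : μ * ‖s‖ ^ 2 ≤ s ⬝ᵥ A.mulVec s)
    (hd : ‖d‖ ≤ ρ) :
    ⟪s, slidingField k A d s⟫ ≤ -(k * (1 + μ) - ρ) * ‖s‖ := by
  have h_self : ⟪s, ‖s‖⁻¹ • s⟫ = ‖s‖ := by
    rw [real_inner_smul_right, real_inner_self_eq_norm_sq]
    rcases eq_or_ne ‖s‖ 0 with hs | hs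
    · simp [hs]
    · field_simp
  have h_coercive : μ * ‖s‖ ≤ ⟪s, (EuclideanSpace.equiv (Fin n) ℝ).symm (A.mulVec (‖s‖⁻¹ • s))⟫ := by
    rw [EuclideanSpace.inner_equiv_symm, mulVec_smul, dotProduct_smul, smul_eq_mul]
    rcases (norm_nonneg s).eq_or_lt with hs | hs
    · simp [← hs]
    · rw [le_inv_mul_iff₀ hs]
      linarith
  have h_disturbance : ⟪s, d⟫ ≤ ‖s‖ * ρ :=
    (real_inner_le_norm s d).trans (mul_le_mul_of_nonneg_left hd (norm_nonneg s))
  simp only [slidingField, inner_add_right, inner_sub_right, inner_neg_right,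
    real_inner_smul_right, h_self]
  nlinarith [mul_le_mul_of_nonneg_left h_coercive hk]

theorem HasDerivAt.norm {E : Type*} [NormedAddCommGroup E] [InnerProductSpace ℝ E]
    {f : ℝ → E} {f' : E} {x : ℝ} (hf : HasDerivAt f f' x) (hx : f x ≠ 0) :
    HasDerivAt (‖f ·‖) (⟪f x, f'⟫ / ‖f x‖) x := by
  have h_sqrt := hf.norm_sq.sqrt (by simpa using hx)
  simp only [Real.sqrt_sq (norm_nonneg _)] at h_sqrt
  convert h_sqrt using 1
  ring

section FiniteTimeConvergence

variable {E : Type*} [NormedAddCommGroup E] [InnerProductSpace ℝ E] {σ : ℝ → E} {κ : ℝ}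

theorem norm_add_mul_le_of_inner_deriv_le {a b : ℝ} (hab : a ≤ b)
    (hσc : ContinuousOn σ (Set.Icc a b)) (hσd : ∀ x ∈ Set.Ioo a b, DifferentiableAt ℝ σ x)
    (hne : ∀ x ∈ Set.Ioo a b, σ x ≠ 0)
    (hdesc : ∀ x ∈ Set.Ioo a b, ⟪σ x, deriv σ x⟫ ≤ -κ * ‖σ x‖) :
    ‖σ b‖ + κ * b ≤ ‖σ a‖ + κ * a := by
  have h_deriv : ∀ x ∈ interior (Set.Icc a b),
      HasDerivAt (fun t ↦ ‖σ t‖ + κ * t) (⟪σ x, deriv σ x⟫ / ‖σ x‖ + κ) x := by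
    intro x hx
    rw [interior_Icc] at hx
    exact ((hσd x hx).hasDerivAt.norm (hne x hx)).add
      (by simpa using (hasDerivAt_id x).const_mul κ)
  refine antitoneOn_of_hasDerivWithinAt_nonpos (convex_Icc a b)
    (hσc.norm.add (continuousOn_const.mul continuousOn_id))
    (fun x hx ↦ (h_deriv x hx).hasDerivWithinAt) (fun x hx ↦ ?_)
    (Set.left_mem_Icc.2 hab) (Set.right_mem_Icc.2 hab) hab
  rw [interior_Icc] at hx
  have hpos : 0 < ‖σ x‖ := norm_pos_iff.2 (hne x hx)
  rw [← le_neg_iff_add_nonpos_right, div_le_iff₀ hpos]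
  exact hdesc x hx

theorem IsClosed.exists_last_mem_Ico {s : Set ℝ} (hs : IsClosed s) {a t : ℝ} (ha : a ∈ s)
    (hat : a ≤ t) (ht : t ∉ s) : ∃ c ∈ s, a ≤ c ∧ c < t ∧ ∀ x ∈ Set.Ioo c t, x ∉ s := by
  set S := s ∩ Set.Icc a t
  have hbdd : BddAbove S := ⟨t, fun x hx ↦ hx.2.2⟩
  obtain ⟨hc, hac, hct⟩ := (hs.inter isClosed_Icc).csSup_mem ⟨a, ha, le_rfl, hat⟩ hbdd
  refine ⟨sSup S, hc, hac, hct.lt_of_ne fun h ↦ ht (h ▸ hc), fun x hx hxs ↦ ?_⟩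
  exact hx.1.not_ge (le_csSup hbdd ⟨hxs, hac.trans hx.1.le, hx.2.le⟩)

theorem eq_zero_of_inner_deriv_le_neg_mul_norm (hσ : Differentiable ℝ σ) (hκ : 0 < κ)
    (hdesc : ∀ t ≥ (0 : ℝ), σ t ≠ 0 → ⟪σ t, deriv σ t⟫ ≤ -κ * ‖σ t‖) :
    ∀ t ≥ ‖σ 0‖ / κ, σ t = 0 := by
  intro t ht
  by_contra hσt
  have hσ0 : ‖σ 0‖ ≤ κ * t := by rwa [ge_iff_le, div_le_iff₀' hκ] at ht
  have ht0 : 0 ≤ t := (mul_nonneg_iff_of_pos_left hκ).1 ((norm_nonneg _).trans hσ0)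
  -- The last point `c < t` of this set is either the initial time or a zero of `σ`.
  have hZ : IsClosed ({0} ∪ {x | σ x = 0}) :=
    isClosed_singleton.union (isClosed_eq hσ.continuous continuous_const)
  obtain ⟨c, hc, hc0, hct, hgap⟩ := hZ.exists_last_mem_Ico (Or.inl rfl) ht0 <| by
    rintro (rfl | h)
    · exact hσt (norm_le_zero_iff.1 (by simpa using hσ0))
    · exact hσt h
  have hne : ∀ x ∈ Set.Ioo c t, σ x ≠ 0 := fun x hx h ↦ hgap x hx (Or.inr h)
  have key := norm_add_mul_le_of_inner_deriv_le hct.le hσ.continuous.continuousOn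
    (fun x _ ↦ hσ x) hne (fun x hx ↦ hdesc x (hc0.trans hx.1.le) (hne x hx))
  have hσt_pos : 0 < ‖σ t‖ := norm_pos_iff.2 hσt
  rcases hc with rfl | hc
  · linarith
  · rw [show σ c = 0 from hc, norm_zero] at key
    nlinarith

end FiniteTimeConvergence

theorem stmt16_general {n : ℕ} (σ : ℝ → EuclideanSpace ℝ (Fin n)) (hσ : Differentiable ℝ σ)
    (A : ℝ → Matrix (Fin n) (Fin n) ℝ) (d : ℝ → EuclideanSpace ℝ (Fin n))
    (ρ k : ℝ → ℝ) (μ κ : ℝ) (hμ : μ > -1) (hκ : 0 < κ)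
    (hA : ∀ t ≥ (0 : ℝ), ∀ y : EuclideanSpace ℝ (Fin n),
      μ * ‖y‖ ^ 2 ≤ y ⬝ᵥ (A t).mulVec y)
    (hd : ∀ t ≥ (0 : ℝ), ‖d t‖ ≤ ρ t)
    (hk : ∀ t ≥ (0 : ℝ), k t = (κ + ρ t) / (1 + μ))
    (hdyn : ∀ t ≥ (0 : ℝ), σ t ≠ 0 →
      deriv σ t =
        -(k t • (‖σ t‖⁻¹ • σ t))
          - k t • (EuclideanSpace.equiv (Fin n) ℝ).symm ((A t).mulVec (‖σ t‖⁻¹ • σ t))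
          + d t) :
    (∀ t ≥ (0 : ℝ), σ t ≠ 0 → ⟪σ t, deriv σ t⟫ ≤ -κ * ‖σ t‖) ∧
      (∀ t ≥ Real.sqrt 2 * ‖σ 0‖ / κ, σ t = 0) := by
  have hμ' : 0 < 1 + μ := by linarith
  have hdesc : ∀ t ≥ (0 : ℝ), σ t ≠ 0 → ⟪σ t, deriv σ t⟫ ≤ -κ * ‖σ t‖ := by
    intro t ht hσt
    have hρ : 0 ≤ ρ t := (norm_nonneg _).trans (hd t ht)
    have hk0 : 0 ≤ k t := by rw [hk t ht]; positivity
    have hgain : k t * (1 + μ) - ρ t = κ := by rw [hk t ht, div_mul_cancel₀ _ hμ'.ne']; ring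
    rw [hdyn t ht hσt, ← hgain]
    exact inner_slidingField_le hk0 (hA t ht (σ t)) (hd t ht)
  refine ⟨hdesc, fun t ht ↦ eq_zero_of_inner_deriv_le_neg_mul_norm hσ hκ hdesc t ?_⟩
  refine le_trans ?_ ht
  gcongr
  exact le_mul_of_one_le_left (norm_nonneg _) (by simp [Real.one_le_sqrt])

/-- Trajectory-level content of Theorem 1: along any solution of the closed-loop
sliding-variable dynamics `σ̇ = −k σ/‖σ‖ − k A (σ/‖σ‖) + d` with gain
`k = (κ + ρ)/(1 + μ)`, one has `⟨σ, σ̇⟩ ≤ −κ‖σ‖` wherever `σ ≠ 0`, and `σ` reaches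
zero no later than `T = √2 ‖σ(0)‖ / κ` and stays there. -/
theorem stmt16 {n : ℕ} (σ : ℝ → EuclideanSpace ℝ (Fin n)) (hσ : Differentiable ℝ σ)
    (A : ℝ → Matrix (Fin n) (Fin n) ℝ) (d : ℝ → EuclideanSpace ℝ (Fin n))
    (ρ k : ℝ → ℝ) (μ κ : ℝ) (hμ : μ > -1) (hκ : 0 < κ)
    (hA : ∀ t ≥ (0 : ℝ), ∀ y : EuclideanSpace ℝ (Fin n),
      μ * ‖y‖ ^ 2 ≤ y ⬝ᵥ (A t).mulVec y)
    (hd : ∀ t ≥ (0 : ℝ), ‖d t‖ ≤ ρ t) (hρ : ∀ t ≥ (0 : ℝ), 0 ≤ ρ t)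
    (hk : ∀ t ≥ (0 : ℝ), k t = (κ + ρ t) / (1 + μ))
    (hdyn : ∀ t ≥ (0 : ℝ), σ t ≠ 0 →
      deriv σ t =
        -(k t • (‖σ t‖⁻¹ • σ t))
          - k t • (EuclideanSpace.equiv (Fin n) ℝ).symm ((A t).mulVec (‖σ t‖⁻¹ • σ t))
          + d t) :
    (∀ t ≥ (0 : ℝ), σ t ≠ 0 → ⟪σ t, deriv σ t⟫ ≤ -κ * ‖σ t‖) ∧
      (∀ t ≥ Real.sqrt 2 * ‖σ 0‖ / κ, σ t = 0) :=
  stmt16_general σ hσ A d ρ k μ κ hμ hκ hA hd hk hdyn
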